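/- Let ā > 0 and let ρ : ℝ → ℝ be twice continuously differentiable, 2π-periodic, with ρ(θ) > 0 and ρ(θ)² + 2ρ'(θ)² − ρ(θ)ρ''(θ) > 0 for all θ. Let Φ : ℝ² → ℝ satisfy Φ(r cos θ, r sin θ) = ā r² / ρ(θ)² for all r > 0 and θ ∈ ℝ. Then Φ is twice continuously differentiable on ℝ² \ {0} and there exists δ₁ > 0 such that for every x ∈ ℝ² with x ≠ 0 and every X ∈ ℝ², the second derivative of Φ at x satisfies D²Φ(x)(X, X) ≥ δ₁ ‖X‖². -/

import Mathlib

/-!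
Write `Φ z = ‖z‖² u (arg z)` with `u = ā / ρ²`. Near `x = r (cos θ₀, sin θ₀)` the polar angle is
`θ₀ + arctan (q / p)` in the coordinates `(p, q)` of the frame rotated by `θ₀`, so `Φ` is smooth
off the origin, and differentiating twice along `t ↦ x + t X` with `X = a e_r + b e_θ` gives
`D²Φ(x)(X, X) = 2u a² + 2u' ab + (u'' + 2u) b²` at `θ₀`, independently of `r`.
Its determinant is `4 ā² (ρ² + 2ρ'² - ρρ'') / ρ⁶ > 0`, so its smallest eigenvalue is at least
`det / trace > 0`, a continuous `2π`-periodic function of `θ₀`, hence bounded below.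
-/

open Real Filter Topology

local notation "E2" => EuclideanSpace ℝ (Fin 2)

theorem Function.Periodic.deriv {𝕜 F : Type*} [NontriviallyNormedField 𝕜] [NormedAddCommGroup F]
    [NormedSpace 𝕜 F] {f : 𝕜 → F} {c : 𝕜} (hf : Function.Periodic f c) :
    Function.Periodic (deriv f) c := fun x => by
  rw [← deriv_comp_add_const, hf.funext]

theorem Function.Periodic.exists_pos_le_of_continuous {f : ℝ → ℝ} {c : ℝ}
    (hf : Function.Periodic f c) (hc : c ≠ 0) (hcont : Continuous f) (hpos : ∀ x, 0 < f x) :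
    ∃ δ, 0 < δ ∧ ∀ x, δ ≤ f x := by
  obtain ⟨_, ⟨x, rfl⟩, hmin⟩ :=
    (hf.compact_of_continuous hc hcont).exists_isLeast (Set.range_nonempty f)
  exact ⟨f x, hpos x, fun y => hmin ⟨y, rfl⟩⟩

/-- `(A + C) (A a² + 2 B a b + C b²) - (A C - B²) (a² + b²) = (A a + B b)² + (B a + C b)²`. -/
theorem div_mul_le_quadratic {A B C : ℝ} (h : 0 < A + C) (a b : ℝ) :
    (A * C - B ^ 2) / (A + C) * (a ^ 2 + b ^ 2) ≤ A * a ^ 2 + 2 * B * a * b + C * b ^ 2 := by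
  rw [div_mul_eq_mul_div, div_le_iff₀ h]
  nlinarith [sq_nonneg (A * a + B * b), sq_nonneg (B * a + C * b)]

theorem fderiv_fderiv_apply_eq_deriv_deriv {E : Type*} [NormedAddCommGroup E] [NormedSpace ℝ E]
    {Φ : E → ℝ} {x : E} (hd : ∀ᶠ z in 𝓝 x, DifferentiableAt ℝ Φ z)
    (hd2 : DifferentiableAt ℝ (fderiv ℝ Φ) x) (X : E) :
    fderiv ℝ (fderiv ℝ Φ) x X X = deriv (deriv fun s : ℝ => Φ (x + s • X)) 0 := by
  have hline : ∀ t : ℝ, HasDerivAt (fun s : ℝ => x + s • X) X t := fun t => by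
    simpa using ((hasDerivAt_id t).smul_const X).const_add x
  have hd' : ∀ᶠ t in 𝓝 (0 : ℝ), DifferentiableAt ℝ Φ (x + t • X) :=
    (hline 0).continuousAt.tendsto.eventually (by simpa using hd)
  have h1 : deriv (fun s : ℝ => Φ (x + s • X)) =ᶠ[𝓝 0] fun t => fderiv ℝ Φ (x + t • X) X := by
    filter_upwards [hd'] with t ht
    exact (ht.hasFDerivAt.comp_hasDerivAt t (hline t)).deriv
  have h2 : HasDerivAt (fun t : ℝ => fderiv ℝ Φ (x + t • X) X)
      (fderiv ℝ (fderiv ℝ Φ) x X X) 0 := by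
    have hd2' : HasFDerivAt (fderiv ℝ Φ) (fderiv ℝ (fderiv ℝ Φ) x) (x + (0 : ℝ) • X) := by
      simpa using hd2.hasFDerivAt
    exact (ContinuousLinearMap.apply ℝ ℝ X).hasFDerivAt.comp_hasDerivAt 0
      (hd2'.comp_hasDerivAt 0 (hline 0))
  rw [h1.deriv_eq, h2.deriv]

noncomputable def polarHessian (u : ℝ → ℝ) (θ a b : ℝ) : ℝ :=
  2 * u θ * a ^ 2 + 2 * deriv u θ * a * b + (deriv (deriv u) θ + 2 * u θ) * b ^ 2

noncomputable def polarHessianDet (u : ℝ → ℝ) (θ : ℝ) : ℝ :=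
  2 * u θ * (deriv (deriv u) θ + 2 * u θ) - deriv u θ ^ 2

theorem exists_pos_mul_le_polarHessian {u : ℝ → ℝ} {c : ℝ} (hu : ContDiff ℝ 2 u)
    (hper : Function.Periodic u c) (hc : c ≠ 0) (hu_pos : ∀ θ, 0 < u θ)
    (hdet : ∀ θ, 0 < polarHessianDet u θ) :
    ∃ δ, 0 < δ ∧ ∀ θ a b, δ * (a ^ 2 + b ^ 2) ≤ polarHessian u θ a b := by
  set trace := fun θ => 2 * u θ + (deriv (deriv u) θ + 2 * u θ)
  have htrace : ∀ θ, 0 < trace θ := fun θ => by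
    have hdetθ := hdet θ
    unfold polarHessianDet at hdetθ
    nlinarith [hu_pos θ, sq_nonneg (deriv u θ)]
  have hu0 : Continuous u := hu.continuous
  have hu1 : Continuous (deriv u) := hu.continuous_deriv one_le_two
  have hu2 : Continuous (deriv (deriv u)) := (hu.deriv' (n := 1)).continuous_deriv le_rfl
  have hcont : Continuous fun θ => polarHessianDet u θ / trace θ :=
    Continuous.div (by unfold polarHessianDet; fun_prop) (by fun_prop) fun θ => (htrace θ).ne'
  have hper' : Function.Periodic (fun θ => polarHessianDet u θ / trace θ) c := fun θ => by
    simp only [polarHessianDet, trace, hper θ, hper.deriv θ, hper.deriv.deriv θ]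
  obtain ⟨δ, hδ, hle⟩ := hper'.exists_pos_le_of_continuous hc hcont
    fun θ => div_pos (hdet θ) (htrace θ)
  refine ⟨δ, hδ, fun θ a b => ?_⟩
  calc δ * (a ^ 2 + b ^ 2) ≤ polarHessianDet u θ / trace θ * (a ^ 2 + b ^ 2) := by
        gcongr; exact hle θ
    _ ≤ polarHessian u θ a b := div_mul_le_quadratic (htrace θ) a b

section ConstDivSq

variable {ρ : ℝ → ℝ} (abar : ℝ)

theorem hasDerivAt_const_div_sq {θ ρ' : ℝ} (hρ : HasDerivAt ρ ρ' θ) (hθ : ρ θ ≠ 0) :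
    HasDerivAt (fun θ => abar / ρ θ ^ 2) (-2 * abar * ρ' / ρ θ ^ 3) θ := by
  refine ((hasDerivAt_const θ abar).fun_div (hρ.fun_pow 2) (pow_ne_zero 2 hθ)).congr_deriv ?_
  field_simp
  ring

theorem deriv_deriv_const_div_sq (hρ : ContDiff ℝ 2 ρ) (hpos : ∀ θ, ρ θ ≠ 0) (θ : ℝ) :
    deriv (deriv fun θ => abar / ρ θ ^ 2) θ
      = -2 * abar * (deriv (deriv ρ) θ * ρ θ - 3 * deriv ρ θ ^ 2) / ρ θ ^ 4 := by
  have hρ1 : Differentiable ℝ ρ := hρ.differentiable two_ne_zero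
  have hρ2 : Differentiable ℝ (deriv ρ) := (hρ.deriv' (n := 1)).differentiable one_ne_zero
  have hderiv : deriv (fun θ => abar / ρ θ ^ 2) = fun θ => -2 * abar * deriv ρ θ / ρ θ ^ 3 :=
    funext fun θ => (hasDerivAt_const_div_sq abar (hρ1 θ).hasDerivAt (hpos θ)).deriv
  rw [hderiv]
  convert (((hρ2 θ).hasDerivAt.const_mul (-2 * abar)).fun_div
    ((hρ1 θ).hasDerivAt.fun_pow 3) (pow_ne_zero 3 (hpos θ))).deriv using 1
  field_simp [hpos θ]
  ring

theorem polarHessianDet_const_div_sq (hρ : ContDiff ℝ 2 ρ) (hpos : ∀ θ, ρ θ ≠ 0) (θ : ℝ) :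
    polarHessianDet (fun θ => abar / ρ θ ^ 2) θ
      = 4 * abar ^ 2 * (ρ θ ^ 2 + 2 * deriv ρ θ ^ 2 - ρ θ * deriv (deriv ρ) θ) / ρ θ ^ 6 := by
  rw [polarHessianDet, deriv_deriv_const_div_sq abar hρ hpos,
    (hasDerivAt_const_div_sq abar ((hρ.differentiable two_ne_zero) θ).hasDerivAt (hpos θ)).deriv]
  field_simp [hpos θ]
  ring

end ConstDivSq

noncomputable def radialCoord (θ : ℝ) : E2 →L[ℝ] ℝ :=
  cos θ • EuclideanSpace.proj 0 + sin θ • EuclideanSpace.proj 1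

noncomputable def angularCoord (θ : ℝ) : E2 →L[ℝ] ℝ :=
  -sin θ • EuclideanSpace.proj 0 + cos θ • EuclideanSpace.proj 1

@[simp]
theorem radialCoord_apply (θ : ℝ) (z : E2) : radialCoord θ z = cos θ * z 0 + sin θ * z 1 := rfl

@[simp]
theorem angularCoord_apply (θ : ℝ) (z : E2) :
    angularCoord θ z = -sin θ * z 0 + cos θ * z 1 := rfl

theorem radialCoord_sq_add_angularCoord_sq (θ : ℝ) (z : E2) :
    radialCoord θ z ^ 2 + angularCoord θ z ^ 2 = ‖z‖ ^ 2 := by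
  rw [EuclideanSpace.norm_sq_eq, Fin.sum_univ_two, radialCoord_apply, angularCoord_apply]
  simp only [Real.norm_eq_abs, sq_abs]
  linear_combination (z 0 ^ 2 + z 1 ^ 2) * cos_sq_add_sin_sq θ

theorem exists_radialCoord_eq_norm (x : E2) :
    ∃ θ, radialCoord θ x = ‖x‖ ∧ angularCoord θ x = 0 := by
  set z := Complex.orthonormalBasisOneI.repr.symm x
  have hnorm : ‖z‖ = ‖x‖ := LinearIsometryEquiv.norm_map _ x
  have h0 : x 0 = ‖x‖ * cos z.arg := by
    rw [← hnorm, Complex.norm_mul_cos_arg]; simp [z]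
  have h1 : x 1 = ‖x‖ * sin z.arg := by
    rw [← hnorm, Complex.norm_mul_sin_arg]; simp [z]
  refine ⟨z.arg, ?_, ?_⟩
  · rw [radialCoord_apply, h0, h1]
    linear_combination ‖x‖ * cos_sq_add_sin_sq z.arg
  · rw [angularCoord_apply, h0, h1]
    ring

def HasPolarForm (Φ : E2 → ℝ) (u : ℝ → ℝ) : Prop :=
  ∀ r : ℝ, 0 < r → ∀ θ : ℝ,
    Φ ((WithLp.equiv 2 (Fin 2 → ℝ)).symm ![r * cos θ, r * sin θ]) = r ^ 2 * u θ

/-- On the half-plane `0 < radialCoord θ₀ z` the polar angle of `z` is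
`θ₀ + arctan (angularCoord θ₀ z / radialCoord θ₀ z)`, so this is a smooth expression there for
`‖z‖² u (arg z)`. -/
noncomputable def polarModel (u : ℝ → ℝ) (θ₀ : ℝ) (z : E2) : ℝ :=
  (radialCoord θ₀ z ^ 2 + angularCoord θ₀ z ^ 2) *
    u (θ₀ + arctan (angularCoord θ₀ z / radialCoord θ₀ z))

theorem sqrt_sq_add_sq_eq_mul_sqrt {p : ℝ} (hp : 0 < p) (q : ℝ) :
    √(p ^ 2 + q ^ 2) = p * √(1 + (q / p) ^ 2) := by
  rw [← sqrt_sq hp.le, ← sqrt_mul (sq_nonneg p), sqrt_sq hp.le]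
  congr 1
  field_simp

theorem sqrt_mul_cos_arctan_div {p : ℝ} (hp : 0 < p) (q : ℝ) :
    √(p ^ 2 + q ^ 2) * cos (arctan (q / p)) = p := by
  rw [sqrt_sq_add_sq_eq_mul_sqrt hp, cos_arctan]
  field_simp

theorem sqrt_mul_sin_arctan_div {p : ℝ} (hp : 0 < p) (q : ℝ) :
    √(p ^ 2 + q ^ 2) * sin (arctan (q / p)) = q := by
  rw [sqrt_sq_add_sq_eq_mul_sqrt hp, sin_arctan]
  field_simp

theorem eq_polarModel {Φ : E2 → ℝ} {u : ℝ → ℝ}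
    (hΦ : HasPolarForm Φ u)
    {θ₀ : ℝ} {z : E2} (hz : 0 < radialCoord θ₀ z) : Φ z = polarModel u θ₀ z := by
  set p := radialCoord θ₀ z
  set q := angularCoord θ₀ z
  have hR : 0 < √(p ^ 2 + q ^ 2) := sqrt_pos.2 (by positivity)
  have hcos := sqrt_mul_cos_arctan_div hz q
  have hsin := sqrt_mul_sin_arctan_div hz q
  have hz : (WithLp.equiv 2 (Fin 2 → ℝ)).symm
      ![√(p ^ 2 + q ^ 2) * cos (θ₀ + arctan (q / p)),
        √(p ^ 2 + q ^ 2) * sin (θ₀ + arctan (q / p))] = z := by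
    have hp : p = cos θ₀ * z 0 + sin θ₀ * z 1 := rfl
    have hq : q = -sin θ₀ * z 0 + cos θ₀ * z 1 := rfl
    ext i
    fin_cases i
    · simp only [Fin.zero_eta, Fin.isValue, WithLp.equiv_symm_apply, Matrix.cons_val_zero, cos_add]
      linear_combination cos θ₀ * hcos - sin θ₀ * hsin + cos θ₀ * hp - sin θ₀ * hq
        + z 0 * cos_sq_add_sin_sq θ₀
    · simp only [Fin.mk_one, Fin.isValue, WithLp.equiv_symm_apply, Matrix.cons_val_one,
        Matrix.cons_val_fin_one, sin_add]
      linear_combination sin θ₀ * hcos + cos θ₀ * hsin + sin θ₀ * hp + cos θ₀ * hq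
        + z 1 * cos_sq_add_sin_sq θ₀
  nth_rewrite 1 [← hz]
  rw [hΦ _ hR, sq_sqrt (by positivity)]
  rfl

theorem eventuallyEq_polarModel {Φ : E2 → ℝ} {u : ℝ → ℝ}
    (hΦ : HasPolarForm Φ u)
    {θ₀ : ℝ} {z : E2} (hz : 0 < radialCoord θ₀ z) : Φ =ᶠ[𝓝 z] polarModel u θ₀ :=
  (continuousAt_const.eventually_lt (radialCoord θ₀).continuous.continuousAt hz).mono
    fun _ hw => eq_polarModel hΦ hw

theorem contDiffAt_polarModel {n : WithTop ℕ∞} {u : ℝ → ℝ} (hu : ContDiff ℝ n u) {θ₀ : ℝ} {z : E2}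
    (hz : 0 < radialCoord θ₀ z) : ContDiffAt ℝ n (polarModel u θ₀) z := by
  have hangle : ContDiffAt ℝ n (fun z => θ₀ + arctan (angularCoord θ₀ z / radialCoord θ₀ z)) z :=
    contDiffAt_const.add <| contDiff_arctan.contDiffAt.comp z <|
      (angularCoord θ₀).contDiff.contDiffAt.div (radialCoord θ₀).contDiff.contDiffAt hz.ne'
  exact (by fun_prop : ContDiff ℝ n fun z => radialCoord θ₀ z ^ 2 + angularCoord θ₀ z ^ 2)
    |>.contDiffAt.mul (hu.contDiffAt.comp z hangle)

theorem hasDerivAt_arctan_div_line {r a b t : ℝ} (ht : r + t * a ≠ 0) :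
    HasDerivAt (fun t => arctan (t * b / (r + t * a)))
      (b * r / ((r + t * a) ^ 2 + (t * b) ^ 2)) t := by
  have hline : HasDerivAt (fun t => r + t * a) a t := by
    simpa using ((hasDerivAt_id' t).mul_const a).const_add r
  refine (((hasDerivAt_id' t).mul_const b).fun_div hline ht).arctan.congr_deriv ?_
  field_simp
  ring

theorem deriv_deriv_polar_line {u : ℝ → ℝ} {θ₀ r : ℝ} (hu : Differentiable ℝ u)
    (hu' : DifferentiableAt ℝ (deriv u) θ₀) (hr : 0 < r) (a b : ℝ) :
    deriv (deriv fun t => ((r + t * a) ^ 2 + (t * b) ^ 2) * u (θ₀ + arctan (t * b / (r + t * a)))) 0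
      = polarHessian u θ₀ a b := by
  set η := fun t => θ₀ + arctan (t * b / (r + t * a))
  have hη : ∀ t, r + t * a ≠ 0 → HasDerivAt η (b * r / ((r + t * a) ^ 2 + (t * b) ^ 2)) t :=
    fun t ht => (hasDerivAt_arctan_div_line ht).const_add θ₀
  have hP : ∀ t, HasDerivAt (fun t => (r + t * a) ^ 2 + (t * b) ^ 2)
      (2 * (r + t * a) * a + 2 * (t * b) * b) t := fun t => by
    refine (((((hasDerivAt_id' t).mul_const a).const_add r).fun_pow 2).add
      (((hasDerivAt_id' t).mul_const b).fun_pow 2)).congr_deriv ?_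
    ring
  -- `η' = b r / P`, so the product rule leaves `P' u(η) + b r u'(η)`.
  have hderiv : deriv (fun t => ((r + t * a) ^ 2 + (t * b) ^ 2) * u (η t)) =ᶠ[𝓝 0]
      fun t => (2 * (r + t * a) * a + 2 * (t * b) * b) * u (η t) + b * r * deriv u (η t) := by
    have hopen : IsOpen {t : ℝ | r + t * a ≠ 0} := isOpen_ne_fun (by fun_prop) (by fun_prop)
    filter_upwards [hopen.mem_nhds (by simpa using hr.ne')] with t ht
    have hP0 : (r + t * a) ^ 2 + (t * b) ^ 2 ≠ 0 := by positivity
    refine ((hP t).mul ((hu (η t)).hasDerivAt.comp t (hη t ht))).deriv.trans ?_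
    field_simp
    rfl
  have hη0 : η 0 = θ₀ := by simp [η]
  have hη' : HasDerivAt η (b / r) 0 :=
    (hη 0 (by simpa using hr.ne')).congr_deriv (by simp; field_simp)
  have hQ : HasDerivAt (fun t => 2 * (r + t * a) * a + 2 * (t * b) * b)
      (2 * a ^ 2 + 2 * b ^ 2) 0 := by
    refine ((((hasDerivAt_id' 0).mul_const a).const_add r).const_mul 2 |>.mul_const a).add
      (((hasDerivAt_id' 0).mul_const b).const_mul 2 |>.mul_const b) |>.congr_deriv ?_
    ring
  have huη := (hu (η 0)).hasDerivAt.comp 0 hη'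
  have hu'η := hu'.hasDerivAt.comp_of_eq 0 hη' hη0.symm
  have hg : HasDerivAt
      (fun t => (2 * (r + t * a) * a + 2 * (t * b) * b) * u (η t) + b * r * deriv u (η t)) _ 0 :=
    (hQ.fun_mul huη).fun_add (hu'η.const_mul (b * r))
  rw [hderiv.deriv_eq, hg.deriv, Function.comp_apply, hη0, polarHessian]
  field_simp
  ring

theorem contDiffAt_of_polar {n : WithTop ℕ∞} {Φ : E2 → ℝ} {u : ℝ → ℝ}
    (hΦ : HasPolarForm Φ u)
    (hu : ContDiff ℝ n u) {x : E2} (hx : x ≠ 0) : ContDiffAt ℝ n Φ x := by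
  obtain ⟨θ, hθ, -⟩ := exists_radialCoord_eq_norm x
  have hpos : 0 < radialCoord θ x := hθ ▸ norm_pos_iff.2 hx
  exact (contDiffAt_polarModel hu hpos).congr_of_eventuallyEq (eventuallyEq_polarModel hΦ hpos)

theorem exists_fderiv_fderiv_eq_polarHessian {Φ : E2 → ℝ} {u : ℝ → ℝ}
    (hΦ : HasPolarForm Φ u)
    (hu : ContDiff ℝ 2 u) {x : E2} (hx : x ≠ 0) (X : E2) :
    ∃ θ, fderiv ℝ (fderiv ℝ Φ) x X X = polarHessian u θ (radialCoord θ X) (angularCoord θ X) := by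
  obtain ⟨θ, hθ, hθ'⟩ := exists_radialCoord_eq_norm x
  have hpos : 0 < radialCoord θ x := hθ ▸ norm_pos_iff.2 hx
  have hG := contDiffAt_polarModel hu hpos
  refine ⟨θ, ?_⟩
  rw [(eventuallyEq_polarModel hΦ hpos).fderiv.fderiv_eq,
    fderiv_fderiv_apply_eq_deriv_deriv
      ((hG.eventually (by simp)).mono fun _ hz => hz.differentiableAt two_ne_zero)
      ((hG.fderiv_right (m := 1) le_rfl).differentiableAt one_ne_zero)]
  simp only [polarModel, map_add, map_smul, hθ', smul_eq_mul, zero_add]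
  exact deriv_deriv_polar_line (hu.differentiable two_ne_zero)
    ((hu.deriv' (n := 1)).differentiable one_ne_zero θ) hpos _ _

theorem hessian_uniformly_positive_definite
    (abar : ℝ) (habar : 0 < abar)
    (ρ : ℝ → ℝ) (hρ : ContDiff ℝ 2 ρ)
    (hper : Function.Periodic ρ (2 * π))
    (hpos : ∀ θ : ℝ, 0 < ρ θ)
    (hconv : ∀ θ : ℝ, 0 < ρ θ ^ 2 + 2 * deriv ρ θ ^ 2 - ρ θ * deriv (deriv ρ) θ)
    (Φ : EuclideanSpace ℝ (Fin 2) → ℝ)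
    (hΦ : ∀ r : ℝ, 0 < r → ∀ θ : ℝ,
      Φ ((WithLp.equiv 2 (Fin 2 → ℝ)).symm ![r * cos θ, r * sin θ])
        = abar * r ^ 2 / ρ θ ^ 2) :
    ContDiffOn ℝ 2 Φ ({(0 : EuclideanSpace ℝ (Fin 2))}ᶜ) ∧
    ∃ δ₁ : ℝ, 0 < δ₁ ∧
      ∀ x : EuclideanSpace ℝ (Fin 2), x ≠ 0 →
        ∀ X : EuclideanSpace ℝ (Fin 2),
          δ₁ * ‖X‖ ^ 2 ≤ fderiv ℝ (fderiv ℝ Φ) x X X := by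
  set u : ℝ → ℝ := fun θ => abar / ρ θ ^ 2
  have hρ0 : ∀ θ, ρ θ ≠ 0 := fun θ => (hpos θ).ne'
  have hu : ContDiff ℝ 2 u := contDiff_const.div (hρ.pow 2) fun θ => pow_ne_zero 2 (hρ0 θ)
  have hΦu : HasPolarForm Φ u := fun r hr θ => by rw [hΦ r hr θ]; ring
  refine ⟨fun x hx => (contDiffAt_of_polar hΦu hu hx).contDiffWithinAt, ?_⟩
  have hdet : ∀ θ, 0 < polarHessianDet u θ := fun θ => by
    rw [polarHessianDet_const_div_sq abar hρ hρ0]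
    have := hconv θ
    have := hpos θ
    positivity
  obtain ⟨δ, hδ, hδle⟩ := exists_pos_mul_le_polarHessian hu (fun θ => by simp only [u, hper θ])
    two_pi_pos.ne' (fun θ => div_pos habar (pow_pos (hpos θ) 2)) hdet
  refine ⟨δ, hδ, fun x hx X => ?_⟩
  obtain ⟨θ, hθ⟩ := exists_fderiv_fderiv_eq_polarHessian hΦu hu hx X
  rw [hθ, ← radialCoord_sq_add_angularCoord_sq θ X]
  exact hδle θ _ _
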